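/- arXiv:1605.05009 — 3 statements merged into one kernel-verified Lean document; each statement's English description precedes it below -/
import Mathlib

section
/- Let R be a ring. Then R is a right Σ-V ring if and only if every right ideal I of R is idempotent (I² = I) and every right primitive factor ring of R is a right Σ-V ring. -/
/-!
Let `S` be a simple right `R`-module and `P` its annihilator. A map `g : J → S⁽ᶥ⁾` from a right
ideal kills `(J ∩ P)² ⊆ S⁽ᶥ⁾ P = 0`, so when right ideals are idempotent it factors through the
right ideal `(J + P)/P` of the primitive ring `R/P`; thus Baer's criterion for `S⁽ᶥ⁾` over `R/P`
implies it over `R`. Conversely Baer's criterion descends to factor rings (an extension `R → M`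
is `x ↦ m x`), and simple modules over a factor ring are simple over `R`. Finally, in a right
V-ring, if `b ∈ I \ I²` choose a maximal right ideal `M ⊇ {x | b x ∈ I²}` and extend
`b x ↦ x + M` from `bR` to `R`: this gives `c` with `1 - c b ∈ M`, while `b (c b) ∈ I²` forces
`c b ∈ M`, a contradiction.
-/

universe u

open MulOpposite

/-- A right `A`-module `M` is Σ-injective if the direct sum of any family of copies of `M`
is injective. -/
def IsSigmaInjective (A : Type u) [Ring A] (M : Type u) [AddCommGroup M] [Module A M] : Prop :=
  ∀ ι : Type u, Module.Injective A (ι →₀ M)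

/-- `R` is a right Σ-V ring: every simple right `R`-module is Σ-injective.
Right `R`-modules are modules over `Rᵐᵒᵖ`. -/
def IsRightSigmaVRing (R : Type u) [Ring R] : Prop :=
  ∀ (S : Type u) [AddCommGroup S] [Module Rᵐᵒᵖ S],
    IsSimpleModule Rᵐᵒᵖ S → IsSigmaInjective Rᵐᵒᵖ S

/-- `R` is right primitive: it has a faithful simple right module. -/
def IsRightPrimitiveRing (R : Type u) [Ring R] : Prop :=
  ∃ S : ModuleCat.{u} Rᵐᵒᵖ, IsSimpleModule Rᵐᵒᵖ S ∧ FaithfulSMul Rᵐᵒᵖ S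

section ScalarTransfer

variable {A B M : Type*} [Ring A] [Ring B] [AddCommGroup M] [Module A M] [Module B M]
  {π : A →+* B}

theorem isSimpleModule_iff_of_surjective (hπ : Function.Surjective π)
    (hc : ∀ (a : A) (m : M), π a • m = a • m) : IsSimpleModule A M ↔ IsSimpleModule B M :=
  have : RingHomSurjective π := ⟨hπ⟩
  LinearMap.isSimpleModule_iff_of_bijective (σ := π)
    { toFun := id, map_add' := fun _ _ => rfl, map_smul' := fun a m => (hc a m).symm }
    Function.bijective_id

theorem LinearMap.exists_comp_eq_of_ker_le {X Y : Type*} [AddCommGroup X] [Module A X]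
    [AddCommGroup Y] [Module B Y] (hπ : Function.Surjective π)
    (hc : ∀ (a : A) (m : M), π a • m = a • m) (p : X →ₛₗ[π] Y) (hp : Function.Surjective p)
    (g : X →ₗ[A] M) (hker : LinearMap.ker p ≤ LinearMap.ker g) :
    ∃ g' : Y →ₗ[B] M, ∀ x, g' (p x) = g x := by
  have hg : ∀ x x', p x = p x' → g x = g x' := fun x x' h =>
    sub_eq_zero.1 (by rw [← map_sub]; exact hker (by simp [h]))
  refine ⟨{ toFun := fun y => g (Function.surjInv hp y), map_add' := ?_, map_smul' := ?_ },
    fun x => hg _ _ (Function.surjInv_eq hp _)⟩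
  · intro y z
    rw [← map_add]
    exact hg _ _ (by simp [Function.surjInv_eq])
  · intro b y
    obtain ⟨a, rfl⟩ := hπ b
    rw [RingHom.id_apply, hc, ← map_smul]
    exact hg _ _ (by simp [Function.surjInv_eq])

theorem LinearMap.apply_eq_zero_of_mem_mul {I J : Ideal A} (hI : ∀ a ∈ I, ∀ m : M, a • m = 0)
    (g : J →ₗ[A] M) (x : J) (hx : (x : A) ∈ I * J) : g x = 0 := by
  have hIJ : I * J ≤ (LinearMap.ker g).map J.subtype := Ideal.mul_le.2 fun a ha y hy =>
    ⟨a • ⟨y, hy⟩, show g (a • ⟨y, hy⟩) = 0 by rw [map_smul, hI a ha], rfl⟩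
  obtain ⟨y, hy, hyx⟩ := hIJ hx
  rwa [← Subtype.ext hyx]

theorem Module.Baer.of_restrictScalars (hπ : Function.Surjective π)
    (hc : ∀ (a : A) (m : M), π a • m = a • m) (h : Module.Baer A M) : Module.Baer B M := by
  intro J g
  let g₀ : J.comap π →ₗ[A] M :=
    { toFun := fun x => g ⟨π x, x.2⟩
      map_add' := fun x y => by rw [← map_add]; congr 1; exact Subtype.ext (map_add π _ _)
      map_smul' := fun a x => by
        rw [RingHom.id_apply, ← hc, ← map_smul]; congr 1; exact Subtype.ext (map_mul π _ _) }
  obtain ⟨G, hG⟩ := h _ g₀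
  refine ⟨LinearMap.toSpanSingleton B M (G 1), fun y hy => ?_⟩
  obtain ⟨x, rfl⟩ := hπ y
  calc π x • G 1 = G (x • 1) := by rw [hc, map_smul]
    _ = g ⟨π x, hy⟩ := by rw [smul_eq_mul, mul_one]; exact hG x hy

theorem Module.Baer.restrictScalars_of_mul_self_eq (hπ : Function.Surjective π)
    (hc : ∀ (a : A) (m : M), π a • m = a • m) (hA : ∀ W : Ideal A, W * W = W)
    (h : Module.Baer B M) : Module.Baer A M := by
  intro J g
  have : RingHomSurjective π := ⟨hπ⟩
  -- `g` kills `J ⊓ ker π = (J ⊓ ker π)²`, since `ker π` annihilates `M`; so it factors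
  -- through `π : J → J.map π`.
  have hker : LinearMap.ker (π.toSemilinearMap.submoduleMap J) ≤ LinearMap.ker g := by
    intro x hx
    have hxP : (x : A) ∈ J ⊓ RingHom.ker π := ⟨x.2, congrArg Subtype.val hx⟩
    rw [← hA (J ⊓ RingHom.ker π)] at hxP
    refine g.apply_eq_zero_of_mem_mul (fun a ha m => ?_) x
      (Ideal.mul_mono inf_le_right inf_le_left hxP)
    rw [← hc, RingHom.mem_ker.1 ha, zero_smul]
  obtain ⟨g', hg'⟩ := LinearMap.exists_comp_eq_of_ker_le hπ hc _
    (LinearMap.submoduleMap_surjective _ J) g hker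
  obtain ⟨G, hG⟩ := h _ g'
  refine ⟨LinearMap.toSpanSingleton A M (G 1), fun x hx => ?_⟩
  calc x • G 1 = G (π x • 1) := by rw [map_smul, hc]
    _ = g ⟨x, hx⟩ := by rw [smul_eq_mul, mul_one]; exact (hG _ _).trans (hg' ⟨x, hx⟩)

end ScalarTransfer

section SigmaInjective

variable {A B M : Type u} [Ring A] [Ring B] [AddCommGroup M] [Module A M] [Module B M]
  {π : A →+* B}

theorem IsSigmaInjective.injective (h : IsSigmaInjective A M) : Module.Injective A M :=
  Module.Baer.injective <|
    (Module.Baer.of_injective (h PUnit)).of_equiv (Finsupp.uniqueLinearEquiv A M PUnit.unit)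

theorem IsSigmaInjective.of_restrictScalars (hπ : Function.Surjective π)
    (hc : ∀ (a : A) (m : M), π a • m = a • m) (h : IsSigmaInjective A M) :
    IsSigmaInjective B M := fun ι =>
  Module.Baer.injective <| (Module.Baer.of_injective (h ι)).of_restrictScalars hπ
    fun a v => Finsupp.ext fun i => hc a (v i)

theorem IsSigmaInjective.restrictScalars_of_mul_self_eq (hπ : Function.Surjective π)
    (hc : ∀ (a : A) (m : M), π a • m = a • m) (hA : ∀ W : Ideal A, W * W = W)
    (h : IsSigmaInjective B M) : IsSigmaInjective A M := fun ι =>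
  Module.Baer.injective <| (Module.Baer.of_injective (h ι)).restrictScalars_of_mul_self_eq hπ
    (fun a v => Finsupp.ext fun i => hc a (v i)) hA

end SigmaInjective

theorem Ideal.mul_self_eq_of_injective_quotients {A : Type*} [Ring A]
    (h : ∀ M : Ideal A, M.IsMaximal → Module.Injective A (A ⧸ M)) (W : Ideal A) :
    W * W = W := by
  refine le_antisymm Ideal.mul_le_right fun b hb => ?_
  by_contra hbW
  let φ := LinearMap.toSpanSingleton A A b
  obtain ⟨M, hM, hφM⟩ := Ideal.exists_le_maximal (Submodule.comap φ (W * W)) fun htop =>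
    hbW (by simpa [φ] using (htop ▸ Submodule.mem_top : (1 : A) ∈ Submodule.comap φ (W * W)))
  obtain ⟨H, hH⟩ := (h M hM).out ((LinearMap.ker φ).liftQ φ le_rfl)
    (by rw [← LinearMap.ker_eq_bot, Submodule.ker_liftQ_eq_bot _ _ _ le_rfl])
    (Submodule.factor ((LinearMap.ker_le_comap φ).trans hφM))
  obtain ⟨c, hc⟩ := Submodule.Quotient.mk_surjective M (H 1)
  -- `H` sends `x * b` to the class of `x`; so `H b` is the class of both `1` and `b * c`.
  have h1 : (1 - b * c) ∈ M := by
    rw [← Submodule.Quotient.eq]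
    calc Submodule.Quotient.mk 1 = H b := by simpa [φ] using (hH (Submodule.Quotient.mk 1)).symm
      _ = b • H 1 := by rw [← map_smul, smul_eq_mul, mul_one]
      _ = Submodule.Quotient.mk (b * c) := by rw [← hc, ← Submodule.Quotient.mk_smul, smul_eq_mul]
  have h2 : b * c ∈ M := hφM <| by
    show b * c * b ∈ W * W
    rw [mul_assoc]
    exact Ideal.mul_mem_mul hb (W.mul_mem_left c hb)
  exact hM.ne_top ((Ideal.eq_top_iff_one M).2 (by simpa using M.add_mem h1 h2))

section RightModules

variable (R : Type*) [Semiring R]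

def opLinearEquivSelf : R ≃ₗ[Rᵐᵒᵖ] Rᵐᵒᵖ where
  toFun := op
  invFun := unop
  left_inv _ := rfl
  right_inv _ := rfl
  map_add' _ _ := rfl
  map_smul' _ _ := rfl

variable {R}

theorem map_opLinearEquivSelf_span_mul (I : Submodule Rᵐᵒᵖ R) :
    (Submodule.span Rᵐᵒᵖ {x : R | ∃ a ∈ I, ∃ b ∈ I, x = a * b}).map
        (opLinearEquivSelf R).toLinearMap =
      I.map (opLinearEquivSelf R).toLinearMap * I.map (opLinearEquivSelf R).toLinearMap := by
  refine le_antisymm ?_ (Ideal.mul_le.2 ?_)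
  · rw [Submodule.map_span, Submodule.span_le]
    rintro _ ⟨_, ⟨a, ha, b, hb, rfl⟩, rfl⟩
    exact Ideal.mul_mem_mul ⟨b, hb, rfl⟩ ⟨a, ha, rfl⟩
  · rintro _ ⟨a, ha, rfl⟩ _ ⟨b, hb, rfl⟩
    exact ⟨b * a, Submodule.subset_span ⟨b, hb, a, ha, rfl⟩, rfl⟩

theorem span_mul_self_eq_iff :
    (∀ I : Submodule Rᵐᵒᵖ R, Submodule.span Rᵐᵒᵖ {x : R | ∃ a ∈ I, ∃ b ∈ I, x = a * b} = I) ↔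
      ∀ W : Ideal Rᵐᵒᵖ, W * W = W := by
  refine ⟨fun h W => ?_, fun h I => ?_⟩
  · obtain ⟨I, rfl⟩ := (Submodule.orderIsoMapComap (opLinearEquivSelf R)).surjective W
    simp only [Submodule.orderIsoMapComap_apply, ← map_opLinearEquivSelf_span_mul, h]
  · apply Submodule.map_injective_of_injective (opLinearEquivSelf R).injective
    rw [map_opLinearEquivSelf_span_mul, h]

end RightModules

section ActionRing

variable (R S : Type*) [Ring R] [AddCommGroup S] [Module Rᵐᵒᵖ S]

-- Its range is `R` modulo the annihilator of `S`, a right primitive factor ring of `R`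
-- when `S` is simple.
def rightActionHom : R →+* (AddMonoid.End S)ᵐᵒᵖ :=
  (Module.toAddMonoidEnd Rᵐᵒᵖ S).op.comp (RingEquiv.opOp R).toRingHom

instance : Module (rightActionHom R S).rangeᵐᵒᵖ S :=
  Module.compHom S <|
    (RingEquiv.opOp (AddMonoid.End S)).symm.toRingHom.comp (rightActionHom R S).range.subtype.op

instance : FaithfulSMul (rightActionHom R S).rangeᵐᵒᵖ S :=
  ⟨fun h => unop_injective <| Subtype.ext <| unop_injective <| AddMonoidHom.ext h⟩

theorem rightActionHom_rangeRestrict_op_smul (a : Rᵐᵒᵖ) (m : S) :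
    (rightActionHom R S).rangeRestrict.op a • m = a • m :=
  rfl

end ActionRing

theorem RingHom.op_surjective {R T : Type*} [Semiring R] [Semiring T] {f : R →+* T}
    (hf : Function.Surjective f) : Function.Surjective f.op := fun t =>
  let ⟨r, hr⟩ := hf t.unop
  ⟨MulOpposite.op r, congrArg MulOpposite.op hr⟩

theorem IsRightSigmaVRing.of_surjective {R T : Type u} [Ring R] [Ring T]
    (hR : IsRightSigmaVRing R) {f : R →+* T} (hf : Function.Surjective f) : IsRightSigmaVRing T := by
  intro S _ _ hS
  let _ : Module Rᵐᵒᵖ S := Module.compHom S f.op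
  have hc : ∀ (a : Rᵐᵒᵖ) (m : S), f.op a • m = a • m := fun _ _ => rfl
  have hS' := (isSimpleModule_iff_of_surjective (RingHom.op_surjective hf) hc).2 hS
  exact (hR S hS').of_restrictScalars (RingHom.op_surjective hf) hc

theorem IsRightSigmaVRing.ideal_mul_self_eq {R : Type u} [Ring R] (hR : IsRightSigmaVRing R)
    (W : Ideal Rᵐᵒᵖ) : W * W = W :=
  Ideal.mul_self_eq_of_injective_quotients (fun _ hM =>
    (hR _ (isSimpleModule_iff_isCoatom.2 (Ideal.isMaximal_def.1 hM))).injective) W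

theorem IsRightSigmaVRing.of_primitive_factors {R : Type u} [Ring R]
    (hid : ∀ W : Ideal Rᵐᵒᵖ, W * W = W)
    (hfac : ∀ (T : Type u) [Ring T] (f : R →+* T), Function.Surjective f →
      IsRightPrimitiveRing T → IsRightSigmaVRing T) :
    IsRightSigmaVRing R := by
  intro S _ _ hS
  let f := (rightActionHom R S).rangeRestrict
  have hf : Function.Surjective f := RingHom.rangeRestrict_surjective _
  have hST := (isSimpleModule_iff_of_surjective (RingHom.op_surjective hf)
    (rightActionHom_rangeRestrict_op_smul R S)).1 hS
  exact (hfac _ f hf ⟨ModuleCat.of _ S, hST, inferInstance⟩ S hST).restrictScalars_of_mul_self_eq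
    (RingHom.op_surjective hf) (rightActionHom_rangeRestrict_op_smul R S) hid

/-- A ring `R` is a right Σ-V ring if and only if every right ideal `I` of `R` is
idempotent (`I² = I`) and every right primitive factor ring of `R` is a right Σ-V ring. -/
theorem rightSigmaV_iff_idempotent_ideals_and_primitive_factors
    (R : Type u) [Ring R] :
    IsRightSigmaVRing R ↔
      ((∀ I : Submodule Rᵐᵒᵖ R,
          Submodule.span Rᵐᵒᵖ {x : R | ∃ a ∈ I, ∃ b ∈ I, x = a * b} = I) ∧
        ∀ (T : Type u) [Ring T] (f : R →+* T), Function.Surjective f →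
          IsRightPrimitiveRing T → IsRightSigmaVRing T) := by
  rw [span_mul_self_eq_iff]
  exact ⟨fun hR => ⟨hR.ideal_mul_self_eq, fun _ _ _ hf _ => hR.of_surjective hf⟩,
    fun ⟨hid, hfac⟩ => .of_primitive_factors hid hfac⟩
end

section
/- If R is a right Σ-V ring, then every finitely generated right R-module is directly finite, i.e., not isomorphic to any proper direct summand of itself. -/
universe u

open MulOpposite

/-- A module `M` is directly finite (Dedekind finite) if whenever `M ≅ M ⊕ N`
for some module `N`, then `N = 0`. -/
def IsDirectlyFinite (A : Type u) [Ring A] (M : Type u) [AddCommGroup M] [Module A M] : Prop :=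
  ∀ (N : Type u) [AddCommGroup N] [Module A N], Nonempty (M ≃ₗ[A] (M × N)) → Subsingleton N

/-!
If `M ≅ M ⊕ N` with `N ≠ 0`, iterating the isomorphism embeds `N^(ℕ)` into `M`. Since `N` is a
quotient of `M` it is finitely generated, so it has a simple quotient `S`, and `N^(ℕ)` maps onto
`S^(ℕ)`. As `S^(ℕ)` is injective, this surjection extends to `M → S^(ℕ)`, which makes `S^(ℕ)`
finitely generated: impossible for an infinite direct sum of nonzero modules.
-/

theorem Module.Injective.finite_of_subquotient {A : Type*} [Ring A] {P M Q : Type u}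
    [AddCommGroup P] [Module A P] [AddCommGroup M] [Module A M] [AddCommGroup Q] [Module A Q]
    [Module.Injective A Q] [Module.Finite A M] {i : P →ₗ[A] M} (hi : Function.Injective i)
    {p : P →ₗ[A] Q} (hp : Function.Surjective p) : Module.Finite A Q := by
  obtain ⟨f, hf⟩ := Module.Injective.out i hi p
  refine .of_surjective f fun q ↦ ?_
  obtain ⟨x, rfl⟩ := hp q
  exact ⟨i x, hf x⟩

theorem Module.Finite.exists_isSimpleModule_quotient (A : Type*) [Ring A] (N : Type*)
    [AddCommGroup N] [Module A N] [Module.Finite A N] [Nontrivial N] :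
    ∃ m : Submodule A N, IsSimpleModule A (N ⧸ m) := by
  obtain ⟨m, hm⟩ := IsCoatomic.exists_coatom (Submodule A N)
  exact ⟨m, isSimpleModule_iff_isCoatom.mpr hm⟩

theorem LinearEquiv.exists_injective_finsupp_nat_of_prod {A M N : Type*} [Semiring A]
    [AddCommMonoid M] [Module A M] [AddCommMonoid N] [Module A N] (e : M ≃ₗ[A] M × N) :
    ∃ g : (ℕ →₀ N) →ₗ[A] M, Function.Injective g :=
  LinearMap.exists_finsupp_nat_of_prod_injective
    (f := e.symm.toLinearMap ∘ₗ (LinearEquiv.prodComm A N M).toLinearMap)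
    (e.symm.injective.comp (LinearEquiv.prodComm A N M).injective)

/-- If `R` is a right Σ-V ring, then every finitely generated right `R`-module is
directly finite. -/
theorem directlyFinite_of_rightSigmaV (R : Type u) [Ring R] (hR : IsRightSigmaVRing R)
    (M : Type u) [AddCommGroup M] [Module Rᵐᵒᵖ M] (hM : Module.Finite Rᵐᵒᵖ M) :
    IsDirectlyFinite Rᵐᵒᵖ M := by
  intro N _ _ ⟨e⟩
  by_contra hN
  rw [not_subsingleton_iff_nontrivial] at hN
  have : Module.Finite Rᵐᵒᵖ N :=
    .of_surjective (LinearMap.snd _ _ _ ∘ₗ e.toLinearMap) (Prod.snd_surjective.comp e.surjective)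
  obtain ⟨m, hm⟩ := Module.Finite.exists_isSimpleModule_quotient Rᵐᵒᵖ N
  obtain ⟨g, hg⟩ := e.exists_injective_finsupp_nat_of_prod
  have : Module.Injective Rᵐᵒᵖ (ULift.{u} ℕ →₀ N ⧸ m) := hR _ hm _
  let ulift : (ULift.{u} ℕ →₀ N) ≃ₗ[Rᵐᵒᵖ] (ℕ →₀ N) := Finsupp.domLCongr Equiv.ulift
  have hfin : Module.Finite Rᵐᵒᵖ (ULift.{u} ℕ →₀ N ⧸ m) :=
    Module.Injective.finite_of_subquotient (i := g ∘ₗ ulift.toLinearMap)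
      (hg.comp ulift.injective) (p := Finsupp.mapRange.linearMap m.mkQ)
      (Finsupp.mapRange_surjective _ (map_zero _) m.mkQ_surjective)
  simp only [Module.finite_finsupp_iff, not_subsingleton_iff_nontrivial.mpr hm.nontrivial,
    not_isEmpty_of_nonempty, false_or] at hfin
  obtain ⟨-, _⟩ := hfin
  exact not_finite (ULift.{u} ℕ)
end

section
/- Let R be a right Σ-V ring and let S be a simple right R-module with I = ann_r(S) its annihilator. If M denotes a countably infinite direct sum of copies of S, then the annihilator of the injective hull E(M) equals I; in particular E(M) is a right (R/I)-module. -/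
universe u

open MulOpposite

/-- Let `R` be a right Σ-V ring, `S` a simple right `R`-module and
`M = ℕ →₀ S` a countably infinite direct sum of copies of `S`.  If `E` is an injective
hull of `M` (an injective module containing `M` as an essential submodule, via the
embedding `f`), then the annihilator of `E` equals the annihilator `I` of `S`;
in particular `E` is a right `R/I`-module. -/
theorem annihilator_injectiveHull_eq (R : Type u) [Ring R] (hR : IsRightSigmaVRing R)
    (S : Type u) [AddCommGroup S] [Module Rᵐᵒᵖ S] (hS : IsSimpleModule Rᵐᵒᵖ S)
    (E : Type u) [AddCommGroup E] [Module Rᵐᵒᵖ E] (hE : Module.Injective Rᵐᵒᵖ E)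
    (f : (ℕ →₀ S) →ₗ[Rᵐᵒᵖ] E) (hf : Function.Injective f)
    (hess : ∀ K : Submodule Rᵐᵒᵖ E, K ≠ ⊥ → LinearMap.range f ⊓ K ≠ ⊥) :
    Module.annihilator Rᵐᵒᵖ E = Module.annihilator Rᵐᵒᵖ S := by
  have hMinj : Module.Injective Rᵐᵒᵖ (ULift.{u} ℕ →₀ S) := hR S hS (ULift.{u} ℕ)
  let e : (ℕ →₀ S) ≃ₗ[Rᵐᵒᵖ] (ULift.{u} ℕ →₀ S) :=
    Finsupp.domLCongr Equiv.ulift.symm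
  obtain ⟨r0, hr0⟩ := hMinj.out f hf e.toLinearMap
  let r : E →ₗ[Rᵐᵒᵖ] (ℕ →₀ S) := e.symm.toLinearMap ∘ₗ r0
  have hr : ∀ x, r (f x) = x := by
    intro x
    simp [r, hr0 x]
  have hker : LinearMap.ker r = ⊥ := by
    by_contra h
    apply hess _ h
    rw [eq_bot_iff]
    rintro x hx
    obtain ⟨⟨m, rfl⟩, h2⟩ := Submodule.mem_inf.mp hx
    have : m = 0 := by
      rw [← hr m]
      exact LinearMap.mem_ker.mp h2
    simp [this]
  ext a
  rw [Module.mem_annihilator, Module.mem_annihilator]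
  constructor
  · intro h s
    have h1 : f (a • Finsupp.single 0 s) = 0 := by
      rw [map_smul, h]
    have h2 : a • Finsupp.single 0 s = 0 := hf (by simpa using h1)
    rw [Finsupp.smul_single] at h2
    exact Finsupp.single_eq_zero.mp h2
  · intro h e
    have h1 : r (a • e) = 0 := by
      rw [map_smul]
      ext i
      simp [h]
    have := LinearMap.ker_eq_bot.mp hker
    exact this (by simpa using h1)
end
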